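/- arXiv:1002.4686 — 2 statements merged into one kernel-verified Lean document; each statement's English description precedes it below -/
import Mathlib

section
/- With the disjoint bump functions φ_n as above, for any two distinct functions P, P' : ℕ → {0,1}, the functions ψ_P = Σ_n P(n)·φ_n and ψ_{P'} = Σ_n P'(n)·φ_n satisfy ‖ψ_P − ψ_{P'}‖_∞ = 1. Consequently, the space of bounded continuous sublinear Higson functions on an unbounded proper metric space is not separable (in the sup norm). -/
set_option linter.unusedSectionVars false

namespace HigsonAux

noncomputable section Aux

variable {X : Type*} [MetricSpace X]

/-- The bump function `φ_n`. -/
def bump (e : X) (x : ℕ → X) (n : ℕ) (y : X) : ℝ :=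
  max 0 (1 - 4 * dist y (x n) / dist e (x n))

/-- `ψ_P = Σ_n P(n) φ_n`. -/
def psi (e : X) (x : ℕ → X) (P : ℕ → Bool) (y : X) : ℝ :=
  ∑' n : ℕ, (if P n then (1:ℝ) else 0) * bump e x n y

section

variable {e : X} {x : ℕ → X}
  (h0 : 0 < dist e (x 0))
  (hgrow : ∀ n : ℕ, 2 * dist e (x n) < dist e (x (n + 1)))

include h0 hgrow

lemma pos : ∀ n, 0 < dist e (x n) := by
  intro n; induction n with
  | zero => exact h0
  | succ k ih => nlinarith [hgrow k]

lemma mono : ∀ m n : ℕ, m < n → 2 * dist e (x m) ≤ dist e (x n) := by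
  intro m n h
  induction n with
  | zero => exact absurd h (Nat.not_lt_zero m)
  | succ k ih =>
    rcases Nat.lt_succ_iff_lt_or_eq.mp h with h' | h'
    · have h1 := hgrow k
      have h2 := pos h0 hgrow k
      linarith [ih h']
    · subst h'; exact (hgrow m).le

lemma le0 : ∀ n, dist e (x 0) ≤ dist e (x n) := by
  intro n
  rcases Nat.eq_zero_or_pos n with h | h
  · subst h; exact le_rfl
  · linarith [mono h0 hgrow 0 n h]

lemma bump_nonneg (n : ℕ) (y : X) : 0 ≤ bump e x n y := le_max_left _ _

lemma bump_le_one (n : ℕ) (y : X) : bump e x n y ≤ 1 := by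
  have hp := pos h0 hgrow n
  have : 0 ≤ 4 * dist y (x n) / dist e (x n) := by positivity
  exact max_le (by norm_num) (by linarith)

lemma bump_ne {n : ℕ} {y : X} (h : bump e x n y ≠ 0) :
    4 * dist y (x n) < dist e (x n) := by
  have hp := pos h0 hgrow n
  by_contra hc
  push_neg at hc
  exact h (max_eq_left (sub_nonpos.mpr ((one_le_div hp).mpr hc)))

lemma disj_aux {n m : ℕ} {y : X} (hlt : m < n)
    (hn : bump e x n y ≠ 0) (hm : bump e x m y ≠ 0) : False := by
  have dn := bump_ne h0 hgrow hn
  have dm := bump_ne h0 hgrow hm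
  have hmn := mono h0 hgrow m n hlt
  have t : dist e (x n) ≤ dist e (x m) + dist y (x m) + dist y (x n) := by
    have := dist_triangle4 e (x m) y (x n)
    rw [dist_comm (x m) y] at this
    linarith
  have hpn := pos h0 hgrow n
  linarith

lemma disj {n m : ℕ} {y : X}
    (hn : bump e x n y ≠ 0) (hm : bump e x m y ≠ 0) : n = m := by
  rcases lt_trichotomy n m with h | h | h
  · exact absurd (disj_aux h0 hgrow h hm hn) not_false
  · exact h
  · exact absurd (disj_aux h0 hgrow h hn hm) not_false

lemma bump_self (n : ℕ) : bump e x n (x n) = 1 := by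
  simp [bump]

lemma psi_eq (y : X) : ∃ n : ℕ, (∀ m, m ≠ n → bump e x m y = 0) ∧
    ∀ P : ℕ → Bool, psi e x P y = (if P n then (1:ℝ) else 0) * bump e x n y := by
  by_cases h : ∃ n, bump e x n y ≠ 0
  · obtain ⟨n, hn⟩ := h
    have hz : ∀ m, m ≠ n → bump e x m y = 0 := by
      intro m hm
      by_contra hm'
      exact hm (disj h0 hgrow hm' hn)
    exact ⟨n, hz, fun P => tsum_eq_single n fun m hm => by rw [hz m hm, mul_zero]⟩
  · push_neg at h
    exact ⟨0, fun m _ => h m,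
      fun P => tsum_eq_single 0 fun m _ => by rw [h m, mul_zero]⟩

lemma bump_lip (n : ℕ) (y y' : X) :
    |bump e x n y - bump e x n y'| ≤ 4 / dist e (x n) * dist y y' := by
  have hD := pos h0 hgrow n
  have h1 : |bump e x n y - bump e x n y'| ≤
      |(1 - 4 * dist y (x n) / dist e (x n)) -
        (1 - 4 * dist y' (x n) / dist e (x n))| := by
    rw [bump, bump, max_comm 0, max_comm 0]
    exact abs_max_sub_max_le_abs _ _ _
  have h2 : (1 - 4 * dist y (x n) / dist e (x n)) -
      (1 - 4 * dist y' (x n) / dist e (x n)) =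
      (4 / dist e (x n)) * (dist y' (x n) - dist y (x n)) := by
    field_simp; ring
  have h3 : |dist y' (x n) - dist y (x n)| ≤ dist y y' := by
    rw [dist_comm y y']
    exact abs_dist_sub_le y' y (x n)
  calc |bump e x n y - bump e x n y'| ≤
      |(4 / dist e (x n)) * (dist y' (x n) - dist y (x n))| := by rw [← h2]; exact h1
    _ = (4 / dist e (x n)) * |dist y' (x n) - dist y (x n)| := by
        rw [abs_mul, abs_of_nonneg (by positivity : (0:ℝ) ≤ 4 / dist e (x n))]
    _ ≤ 4 / dist e (x n) * dist y y' := by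
        exact mul_le_mul_of_nonneg_left h3 (by positivity)

lemma term_bound (c : ℝ) (hc : |c| ≤ 1) {n : ℕ} {y y' : X} {B : ℝ} (hB : 0 ≤ B)
    (h : bump e x n y ≠ 0 → 4 / dist e (x n) ≤ B)
    (h' : bump e x n y' ≠ 0 → 4 / dist e (x n) ≤ B) :
    |c * (bump e x n y - bump e x n y')| ≤ B * dist y y' := by
  by_cases hz : bump e x n y ≠ 0 ∨ bump e x n y' ≠ 0
  · have hb := hz.elim h h'
    have lip := bump_lip h0 hgrow n y y'
    calc |c * (bump e x n y - bump e x n y')|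
        = |c| * |bump e x n y - bump e x n y'| := abs_mul _ _
      _ ≤ 1 * (4 / dist e (x n) * dist y y') :=
          mul_le_mul hc lip (abs_nonneg _) zero_le_one
      _ ≤ B * dist y y' := by
          have := mul_le_mul_of_nonneg_right hb (dist_nonneg (x := y) (y := y'))
          linarith
  · push_neg at hz
    rw [hz.1, hz.2, sub_zero, mul_zero, abs_zero]
    positivity

lemma psi_diff (P : ℕ → Bool) (y y' : X) {B : ℝ} (hB : 0 ≤ B)
    (hy : ∀ n, bump e x n y ≠ 0 → 4 / dist e (x n) ≤ B)
    (hy' : ∀ n, bump e x n y' ≠ 0 → 4 / dist e (x n) ≤ B) :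
    |psi e x P y - psi e x P y'| ≤ 2 * B * dist y y' := by
  obtain ⟨n, hn0, hn⟩ := psi_eq h0 hgrow y
  obtain ⟨m, hm0, hm⟩ := psi_eq h0 hgrow y'
  rw [hn P, hm P]
  have hBd : 0 ≤ B * dist y y' := mul_nonneg hB dist_nonneg
  have hc : ∀ k : ℕ, |(if P k then (1:ℝ) else 0)| ≤ 1 := by
    intro k; split_ifs <;> norm_num
  by_cases hnm : n = m
  · subst hnm
    have key : (if P n then (1:ℝ) else 0) * bump e x n y -
        (if P n then (1:ℝ) else 0) * bump e x n y' =
        (if P n then (1:ℝ) else 0) * (bump e x n y - bump e x n y') := by ring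
    rw [key]
    have := term_bound h0 hgrow _ (hc n) hB (hy n) (hy' n)
    linarith
  · have hbm : bump e x m y = 0 := hn0 m (Ne.symm hnm)
    have hbn' : bump e x n y' = 0 := hm0 n hnm
    have key : (if P n then (1:ℝ) else 0) * bump e x n y -
        (if P m then (1:ℝ) else 0) * bump e x m y' =
        (if P n then (1:ℝ) else 0) * (bump e x n y - bump e x n y') +
        (if P m then (1:ℝ) else 0) * (bump e x m y - bump e x m y') := by
      rw [hbm, hbn']; ring
    rw [key]
    have t1 := term_bound h0 hgrow _ (hc n) hB (hy n) (hy' n)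
    have t2 := term_bound h0 hgrow _ (hc m) hB (hy m) (hy' m)
    calc |_ + _| ≤ _ + _ := abs_add_le _ _
      _ ≤ 2 * B * dist y y' := by linarith

lemma psi_val (P : ℕ → Bool) (k : ℕ) :
    psi e x P (x k) = if P k then (1:ℝ) else 0 := by
  obtain ⟨n, hn0, hn⟩ := psi_eq h0 hgrow (x k)
  have hk : bump e x k (x k) = 1 := bump_self h0 hgrow k
  have : n = k := by
    by_contra h
    rw [hn0 k (fun hh => h hh.symm)] at hk
    norm_num at hk
  subst this
  rw [hn P, hk, mul_one]

lemma psi_diff_le_one (P P' : ℕ → Bool) (y : X) :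
    |psi e x P y - psi e x P' y| ≤ 1 := by
  obtain ⟨n, hn0, hn⟩ := psi_eq h0 hgrow y
  rw [hn P, hn P']
  have key : (if P n then (1:ℝ) else 0) * bump e x n y -
      (if P' n then (1:ℝ) else 0) * bump e x n y =
      ((if P n then (1:ℝ) else 0) - (if P' n then (1:ℝ) else 0)) * bump e x n y := by
    ring
  rw [key, abs_mul]
  have h1 : |(if P n then (1:ℝ) else 0) - (if P' n then (1:ℝ) else 0)| ≤ 1 := by
    split_ifs <;> norm_num
  have h2 : |bump e x n y| ≤ 1 := by
    rw [abs_of_nonneg (bump_nonneg h0 hgrow n y)]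
    exact bump_le_one h0 hgrow n y
  calc |_| * |_| ≤ 1 * 1 := mul_le_mul h1 h2 (abs_nonneg _) zero_le_one
    _ = 1 := by norm_num

lemma psi_bound (P : ℕ → Bool) (y : X) : |psi e x P y| ≤ 1 := by
  have h := psi_diff_le_one h0 hgrow P (fun _ => false) y
  have hz : psi e x (fun _ => false) y = 0 := by
    simp [psi]
  rw [hz, sub_zero] at h
  exact h

end

end Aux

end HigsonAux

open HigsonAux in
/-- the functions `ψ_P = Σ_n P(n) φ_n` built from disjoint bumps
satisfy `‖ψ_P − ψ_{P'}‖_∞ = 1` for `P ≠ P'`, and consequently the set of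
bounded continuous sublinear Higson functions on an unbounded proper pointed
metric space is not separable in the sup norm. -/
theorem higson_functions_not_separable
    {X : Type*} [MetricSpace X] [ProperSpace X] (e : X)
    (hunb : ∀ r : ℝ, ∃ x : X, r < dist e x)
    (x : ℕ → X) (h0 : 0 < dist e (x 0))
    (hgrow : ∀ n : ℕ, 2 * dist e (x n) < dist e (x (n + 1))) :
    (∀ P P' : ℕ → Bool, P ≠ P' →
      (⨆ y : X, |(∑' n : ℕ, (if P n then (1:ℝ) else 0) *
          max 0 (1 - 4 * dist y (x n) / dist e (x n))) -
        (∑' n : ℕ, (if P' n then (1:ℝ) else 0) *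
          max 0 (1 - 4 * dist y (x n) / dist e (x n)))|) = 1) ∧
    ¬ TopologicalSpace.IsSeparable
      {f : BoundedContinuousFunction X ℂ | ∃ C > 0,
        ∀ R > 0, ∀ y y' : X, R ≤ dist e y → R ≤ dist e y' →
          ‖f y - f y'‖ ≤ C * dist y y' / R} := by
  have hXne : Nonempty X := ⟨e⟩
  have hval : ∀ P P' : ℕ → Bool, ∀ k, P k ≠ P' k →
      |psi e x P (x k) - psi e x P' (x k)| = 1 := by
    intro P P' k hk
    rw [psi_val h0 hgrow P k, psi_val h0 hgrow P' k]
    cases hPk : P k <;> cases hP'k : P' k <;> simp_all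
  have hsup : ∀ P P' : ℕ → Bool, P ≠ P' →
      (⨆ y : X, |psi e x P y - psi e x P' y|) = 1 := by
    intro P P' hPP'
    have hne : ∃ k, P k ≠ P' k := by
      by_contra h; push_neg at h; exact hPP' (funext h)
    obtain ⟨k, hk⟩ := hne
    have hb : ∀ y : X, |psi e x P y - psi e x P' y| ≤ 1 :=
      psi_diff_le_one h0 hgrow P P'
    have hbdd : BddAbove (Set.range fun y : X => |psi e x P y - psi e x P' y|) :=
      ⟨1, by rintro _ ⟨y, rfl⟩; exact hb y⟩
    exact le_antisymm (ciSup_le hb) (le_ciSup_of_le hbdd (x k) (hval P P' k hk).ge)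
  constructor
  · exact hsup
  · rintro ⟨c, hcount, hsub⟩
    have cont : ∀ P : ℕ → Bool, Continuous fun y : X => ((psi e x P y : ℝ) : ℂ) := by
      intro P
      apply Complex.continuous_ofReal.comp
      have hc0 : ∀ (y : X) (n : ℕ), bump e x n y ≠ 0 →
          4 / dist e (x n) ≤ 4 / dist e (x 0) := by
        intro y n _
        rw [div_le_div_iff₀ (pos h0 hgrow n) h0]
        have := le0 h0 hgrow n
        linarith
      have K : LipschitzWith (Real.toNNReal (8 / dist e (x 0))) (psi e x P) := by
        apply LipschitzWith.of_dist_le_mul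
        intro y y'
        rw [Real.dist_eq, Real.coe_toNNReal _ (by positivity)]
        have h := psi_diff h0 hgrow P y y'
          (by positivity : (0:ℝ) ≤ 4 / dist e (x 0)) (hc0 y) (hc0 y')
        calc |psi e x P y - psi e x P y'| ≤ 2 * (4 / dist e (x 0)) * dist y y' := h
          _ = 8 / dist e (x 0) * dist y y' := by ring
      exact K.continuous
    have bdd1 : ∀ (P : ℕ → Bool) (y : X), ‖((psi e x P y : ℝ) : ℂ)‖ ≤ 1 := by
      intro P y
      rw [Complex.norm_real, Real.norm_eq_abs]
      exact psi_bound h0 hgrow P y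
    set F : (ℕ → Bool) → BoundedContinuousFunction X ℂ := fun P =>
      BoundedContinuousFunction.ofNormedAddCommGroup _ (cont P) 1 (bdd1 P) with hF
    have hFapp : ∀ (P : ℕ → Bool) (y : X), F P y = ((psi e x P y : ℝ) : ℂ) :=
      fun P y => rfl
    have hmem : ∀ P : ℕ → Bool, F P ∈
        {f : BoundedContinuousFunction X ℂ | ∃ C > 0,
          ∀ R > 0, ∀ y y' : X, R ≤ dist e y → R ≤ dist e y' →
            ‖f y - f y'‖ ≤ C * dist y y' / R} := by
      intro P
      refine ⟨10, by norm_num, fun R hR y y' hy hy' => ?_⟩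
      have hRy : ∀ z : X, R ≤ dist e z → ∀ n, bump e x n z ≠ 0 →
          4 / dist e (x n) ≤ 5 / R := by
        intro z hz n hn
        have h4 := bump_ne h0 hgrow hn
        have hDn := pos h0 hgrow n
        have ht : dist e z ≤ dist e (x n) + dist z (x n) := by
          rw [dist_comm z (x n)]; exact dist_triangle e (x n) z
        rw [div_le_div_iff₀ hDn hR]
        linarith
      have hd := psi_diff h0 hgrow P y y'
        (by positivity : (0:ℝ) ≤ 5 / R) (hRy y hy) (hRy y' hy')
      have heq : ‖F P y - F P y'‖ = |psi e x P y - psi e x P y'| := by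
        rw [hFapp, hFapp, ← Complex.ofReal_sub, Complex.norm_real, Real.norm_eq_abs]
      rw [heq]
      calc |psi e x P y - psi e x P y'| ≤ 2 * (5 / R) * dist y y' := hd
        _ = 10 * dist y y' / R := by ring
    have hdist : ∀ P P' : ℕ → Bool, P ≠ P' → (1:ℝ) ≤ dist (F P) (F P') := by
      intro P P' hPP'
      have hne : ∃ k, P k ≠ P' k := by
        by_contra h; push_neg at h; exact hPP' (funext h)
      obtain ⟨k, hk⟩ := hne
      have h1 := BoundedContinuousFunction.dist_coe_le_dist (f := F P) (g := F P') (x k)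
      have h2 : dist (F P (x k)) (F P' (x k)) = 1 := by
        rw [hFapp, hFapp, dist_eq_norm, ← Complex.ofReal_sub, Complex.norm_real,
          Real.norm_eq_abs]
        exact hval P P' k hk
      linarith
    have hclose : ∀ P : ℕ → Bool, ∃ b ∈ c, dist (F P) b < 1/2 := fun P =>
      Metric.mem_closure_iff.mp (hsub (hmem P)) (1/2) (by norm_num)
    choose g hg1 hg2 using hclose
    have hginj : Function.Injective g := by
      intro P P' h
      by_contra hne
      have hd1 := hdist P P' hne
      have d1 := hg2 P
      have d2 := hg2 P'
      have t := dist_triangle (F P) (g P) (F P')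
      rw [h] at t d1
      rw [dist_comm (g P') (F P')] at t
      linarith
    have hcnt : Countable (ℕ → Bool) := by
      have := hcount.to_subtype
      exact Function.Injective.countable
        (f := fun P : ℕ → Bool => (⟨g P, hg1 P⟩ : c))
        (fun P P' h => hginj (congrArg Subtype.val h))
    classical
    have hinj : Function.Injective (fun s : Set ℕ => fun n =>
        @decide (n ∈ s) (Classical.propDecidable _)) := by
      intro s t h
      ext n
      have := congrFun h n
      simpa using this
    have hsetc : Countable (Set ℕ) := hinj.countable
    obtain ⟨f, hf⟩ := (countable_iff_exists_injective (Set ℕ)).mp hsetc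
    exact Function.cantor_injective f hf
end

section
/- If f, g : X → Y are maps between pointed metric spaces that are sublinearly close (for every ε > 0 there is C_ε with d(f(x),g(x)) ≤ ε|x| + C_ε for all x), and φ : Y → ℂ is a bounded function satisfying the generalized sublinear Higson condition, then φ∘f − φ∘g tends to 0 at infinity: for every ε > 0 there is R such that |φ(f(x)) − φ(g(x))| < ε whenever |x| ≥ R. -/
/-- if `f, g` are sublinearly close coarse maps and `φ` satisfies
the generalized sublinear Higson condition, then `φ∘f − φ∘g` tends to `0` at
infinity. -/
theorem higson_pullback_of_sublinearly_close
    {X Y : Type*} [MetricSpace X] [MetricSpace Y] (eX : X) (eY : Y)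
    (f g : X → Y) (A : ℝ) (hA : 0 < A)
    (hf1 : ∀ x, dist eX x / A - A ≤ dist eY (f x))
    (hf2 : ∀ x x', dist (f x) (f x') ≤ A * dist x x' + A)
    (hg1 : ∀ x, dist eX x / A - A ≤ dist eY (g x))
    (hg2 : ∀ x x', dist (g x) (g x') ≤ A * dist x x' + A)
    (hclose : ∀ ε > (0:ℝ), ∃ Cε : ℝ, ∀ x, dist (f x) (g x) ≤ ε * dist eX x + Cε)
    (φ : Y → ℂ) (M : ℝ) (hφb : ∀ y, ‖φ y‖ ≤ M)
    (C : ℝ) (hC : 0 < C)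
    (hφ : ∀ R > 0, ∀ y y', R ≤ dist eY y → R ≤ dist eY y' →
      ‖φ y - φ y'‖ < C * (dist y y' + C) / R) :
    ∀ ε > (0:ℝ), ∃ R : ℝ, ∀ x, R ≤ dist eX x → ‖φ (f x) - φ (g x)‖ < ε := by
  intro ε hε
  set δ := ε / (2 * C * A) with hδdef
  have hδ : 0 < δ := by positivity
  obtain ⟨K, hK⟩ := hclose δ hδ
  refine ⟨max (A ^ 2 + 1) (2 * A * (C * (K + C) + ε * A) / ε + 1), fun x hx => ?_⟩
  set t := dist eX x with htdef
  have ht1 : A ^ 2 + 1 ≤ t := le_trans (le_max_left _ _) hx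
  have ht2 : 2 * A * (C * (K + C) + ε * A) / ε + 1 ≤ t := le_trans (le_max_right _ _) hx
  have hR0 : 0 < t / A - A := by
    rw [sub_pos, lt_div_iff₀ hA]; nlinarith
  have hb := hφ (t / A - A) hR0 (f x) (g x) (hf1 x) (hg1 x)
  have hd := hK x
  have hCδ : C * δ = ε / (2 * A) := by
    rw [hδdef]; field_simp
  have ht2' : 2 * A * (C * (K + C) + ε * A) ≤ ε * t := by
    rw [div_add' _ _ _ (ne_of_gt hε), div_le_iff₀ hε] at ht2
    nlinarith
  have hnum : C * (dist (f x) (g x) + C) ≤ ε * (t / A - A) := by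
    have h1 : C * (dist (f x) (g x) + C) ≤ C * δ * t + C * (K + C) := by nlinarith
    have h2 : C * δ * t + C * (K + C) ≤ ε * (t / A - A) := by
      rw [hCδ]
      have hA' : (0:ℝ) < 2 * A := by linarith
      rw [div_mul_eq_mul_div, div_add' _ _ _ (ne_of_gt hA'), div_le_iff₀ hA']
      have hdiv : t / A * A = t := div_mul_cancel₀ _ (ne_of_gt hA)
      nlinarith [hdiv, ht2']
    linarith
  calc ‖φ (f x) - φ (g x)‖ < C * (dist (f x) (g x) + C) / (t / A - A) := hb
    _ ≤ ε := by rw [div_le_iff₀ hR0]; linarith [hnum]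
end
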